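/- Let k be an integer with 1 ≤ k ≤ n, let ν_1, …, ν_k > 0, and let w_1, …, w_k ∈ ℤ^n be linearly independent vectors with w_i ∈ ν_i C⁰ for each i. For α ≥ 0 set D_α^+ = { Σ_{i=1}^k a_i w_i : a_i ∈ ℤ, 0 ≤ a_i ≤ α/ν_i } and D_α = { Σ_{i=1}^k a_i w_i : a_i ∈ ℤ, |a_i| ≤ α/ν_i }. If |D_α^+| > 2kα + 1, then for every lattice point u ∈ C ∩ ℤ^n there exists a nonzero vector v ∈ D_α with ⟨u, v⟩ = 0. -/

import Mathlib

open scoped BigOperators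
open Pointwise Metric

noncomputable section

/-- `ℝ^n` with the Euclidean structure. -/
abbrev Euc (n : ℕ) := EuclideanSpace ℝ (Fin n)

/-- A point of `ℝ^n` is a lattice point if all its coordinates are integers. -/
def IsLatticePoint {n : ℕ} (x : Euc n) : Prop := ∀ i, ∃ m : ℤ, x i = (m : ℝ)

/-- A compact convex body, symmetric about the origin, with nonempty interior. -/
def IsSymmConvexBody {n : ℕ} (C : Set (Euc n)) : Prop :=
  IsCompact C ∧ Convex ℝ C ∧ (∀ x ∈ C, -x ∈ C) ∧ (interior C).Nonempty

/-- `IsSuccMin C i l` means `l` is the `i`-th successive minimum of `C` w.r.t. `ℤ^n`: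
the least `t > 0` such that `t • C` contains `i` linearly independent lattice points. -/
def IsSuccMin {n : ℕ} (C : Set (Euc n)) (i : ℕ) (l : ℝ) : Prop :=
  IsLeast {t : ℝ | 0 < t ∧ ∃ v : Fin i → Euc n, LinearIndependent ℝ v ∧
    ∀ j, IsLatticePoint (v j) ∧ v j ∈ t • C} l

/-- A finite set of points in `ℝ^n` is in general position if no `n` of its elements
are linearly dependent. -/
def InGenPos {n : ℕ} (S : Finset (Euc n)) : Prop :=
  ∀ T ⊆ S, T.card = n →
    LinearIndependent ℝ (fun x : (T : Set (Euc n)) => (x : Euc n))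

/-- `h(C)`: the maximum cardinality of a subset of `C ∩ ℤ^n` in general position. -/
def maxGenPos {n : ℕ} (C : Set (Euc n)) : ℕ :=
  sSup {k : ℕ | ∃ S : Finset (Euc n), S.card = k ∧ ↑S ⊆ C ∧
    (∀ x ∈ S, IsLatticePoint x) ∧ InGenPos S}

/-- `g(C)`: the minimum number of proper linear subspaces covering `C ∩ ℤ^n`. -/
def coverNum {n : ℕ} (C : Set (Euc n)) : ℕ :=
  sInf {k : ℕ | ∃ F : Finset (Submodule ℝ (Euc n)), F.card = k ∧
    (∀ H ∈ F, H ≠ ⊤) ∧ ∀ x ∈ C, IsLatticePoint x → ∃ H ∈ F, x ∈ H}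

/-- The polar body `C⁰ = {x : ⟨u,x⟩ ≤ 1 for all u ∈ C}`. -/
def polarBody {n : ℕ} (C : Set (Euc n)) : Set (Euc n) :=
  {x | ∀ u ∈ C, inner ℝ u x ≤ (1 : ℝ)}

/-! For a lattice point `u ∈ C`, each `⟨u, w i⟩` is an integer of absolute value at most `ν i`,
since `w i / ν i ∈ C⁰` and `C = -C`. Hence `⟨u, ·⟩` maps `D_α⁺` into the integers of `[-kα, kα]`,
of which there are at most `2kα + 1`. By pigeonhole two distinct points of `D_α⁺` have the same
inner product with `u`, and their difference is the required vector of `D_α`. -/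

theorem Set.exists_ne_map_eq_of_intCast_of_abs_le {α : Type*} {s : Set α} {f : α → ℝ} {B : ℝ}
    (hB : 0 ≤ B) (hint : ∀ x ∈ s, ∃ m : ℤ, f x = m) (hf : ∀ x ∈ s, |f x| ≤ B)
    (hs : 2 * B + 1 < s.ncard) : ∃ x ∈ s, ∃ y ∈ s, x ≠ y ∧ f x = f y := by
  have hround : ∀ x ∈ s, (round (f x) : ℝ) = f x := by
    intro x hx
    obtain ⟨m, hm⟩ := hint x hx
    rw [hm, round_intCast]
  have hmaps : ∀ x ∈ s, round (f x) ∈ (Finset.Icc (-⌊B⌋) ⌊B⌋ : Set ℤ) := by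
    intro x hx
    rw [Finset.coe_Icc, Set.mem_Icc, ← abs_le, Int.le_floor, Int.cast_abs, hround x hx]
    exact hf x hx
  have hcard : ((Finset.Icc (-⌊B⌋) ⌊B⌋ : Set ℤ)).ncard < s.ncard := by
    have hlt : 2 * ⌊B⌋ + 1 < (s.ncard : ℤ) := by
      have : ((2 * ⌊B⌋ + 1 : ℤ) : ℝ) < s.ncard := by push_cast; linarith [Int.floor_le B]
      exact_mod_cast this
    have hfloor : 0 ≤ ⌊B⌋ := Int.floor_nonneg.2 hB
    rw [Set.ncard_coe_finset, Int.card_Icc]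
    omega
  obtain ⟨x, hx, y, hy, hne, hxy⟩ := Set.exists_ne_map_eq_of_ncard_lt_of_maps_to hcard hmaps
  exact ⟨x, hx, y, hy, hne, by rw [← hround x hx, ← hround y hy, hxy]⟩

theorem IsLatticePoint.sum_intCast_smul {n : ℕ} {ι : Type*} [Fintype ι] {w : ι → Euc n}
    (hw : ∀ i, IsLatticePoint (w i)) (a : ι → ℤ) : IsLatticePoint (∑ i, (a i : ℝ) • w i) := by
  choose m hm using hw
  intro j
  refine ⟨∑ i, a i * m i j, ?_⟩
  simp [hm]

theorem IsLatticePoint.inner_eq_intCast {n : ℕ} {x y : Euc n} (hx : IsLatticePoint x)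
    (hy : IsLatticePoint y) : ∃ m : ℤ, inner ℝ x y = m := by
  choose mx hmx using hx
  choose my hmy using hy
  refine ⟨∑ j, mx j * my j, ?_⟩
  simp [PiLp.inner_apply, hmx, hmy, mul_comm]

theorem abs_inner_le_of_mem_smul_polarBody {n : ℕ} {C : Set (Euc n)} (hsymm : ∀ x ∈ C, -x ∈ C)
    {u w : Euc n} (hu : u ∈ C) {ν : ℝ} (hν : 0 ≤ ν) (hw : w ∈ ν • polarBody C) :
    |inner ℝ u w| ≤ ν := by
  obtain ⟨x, hx, rfl⟩ := hw
  have hle : inner ℝ u x ≤ 1 := hx u hu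
  have hge : -inner ℝ u x ≤ 1 := by simpa [inner_neg_left] using hx (-u) (hsymm u hu)
  rw [real_inner_smul_right, abs_mul, abs_of_nonneg hν]
  exact mul_le_of_le_one_right hν (abs_le.2 ⟨by linarith, hle⟩)

theorem abs_inner_sum_smul_le {E : Type*} [NormedAddCommGroup E] [InnerProductSpace ℝ E]
    {ι : Type*} [Fintype ι] {u : E} {w : ι → E} {ν a : ι → ℝ} {α : ℝ} (hν : ∀ i, 0 < ν i)
    (hw : ∀ i, |inner ℝ u (w i)| ≤ ν i) (ha : ∀ i, |a i| ≤ α / ν i) :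
    |inner ℝ u (∑ i, a i • w i)| ≤ Fintype.card ι * α := by
  rw [inner_sum]
  calc |∑ i, inner ℝ u (a i • w i)| ≤ ∑ i, |inner ℝ u (a i • w i)| :=
        Finset.abs_sum_le_sum_abs _ _
    _ ≤ ∑ _i : ι, α := Finset.sum_le_sum fun i _ => by
        rw [real_inner_smul_right, abs_mul]
        calc |a i| * |inner ℝ u (w i)| ≤ α / ν i * ν i :=
              mul_le_mul (ha i) (hw i) (abs_nonneg _) ((abs_nonneg _).trans (ha i))
          _ = α := div_mul_cancel₀ α (hν i).ne'
    _ = Fintype.card ι * α := by simp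

theorem perp_vector_in_D_alpha_general (n : ℕ)
    (C : Set (Euc n)) (hC : IsSymmConvexBody C)
    (k : ℕ)
    (ν : Fin k → ℝ) (hν : ∀ i, 0 < ν i)
    (w : Fin k → Euc n)
    (hwlat : ∀ i, IsLatticePoint (w i)) (hwpol : ∀ i, w i ∈ ν i • polarBody C)
    (α : ℝ) (hα : 0 ≤ α)
    (hcard : 2 * (k : ℝ) * α + 1 <
      (({y : Euc n | ∃ a : Fin k → ℤ, (∀ i, 0 ≤ a i ∧ (a i : ℝ) ≤ α / ν i) ∧
          y = ∑ i, (a i : ℝ) • w i}).ncard : ℝ)) :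
    ∀ u ∈ C, IsLatticePoint u →
      ∃ v ∈ {y : Euc n | ∃ a : Fin k → ℤ, (∀ i, |(a i : ℝ)| ≤ α / ν i) ∧
          y = ∑ i, (a i : ℝ) • w i},
        v ≠ 0 ∧ inner ℝ u v = (0 : ℝ) := by
  intro u hu hulat
  have hinner_w (i : Fin k) : |inner ℝ u (w i)| ≤ ν i :=
    abs_inner_le_of_mem_smul_polarBody hC.2.2.1 hu (hν i).le (hwpol i)
  rw [mul_assoc] at hcard
  obtain ⟨_, ⟨a, ha, rfl⟩, _, ⟨b, hb, rfl⟩, hne, hab⟩ :=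
    Set.exists_ne_map_eq_of_intCast_of_abs_le (f := inner ℝ u) (by positivity) (hs := hcard)
      (by rintro _ ⟨a, -, rfl⟩; exact hulat.inner_eq_intCast (.sum_intCast_smul hwlat a))
      (by
        rintro _ ⟨a, ha, rfl⟩
        simpa using abs_inner_sum_smul_le hν hinner_w fun i =>
          (abs_of_nonneg (Int.cast_nonneg (ha i).1)).trans_le (ha i).2)
  refine ⟨_, ⟨a - b, fun i => ?_, rfl⟩, ?_, ?_⟩
  · rw [Pi.sub_apply, Int.cast_sub]
    exact abs_sub_le_of_nonneg_of_le (Int.cast_nonneg (ha i).1) (ha i).2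
      (Int.cast_nonneg (hb i).1) (hb i).2
  · simpa [sub_smul, Finset.sum_sub_distrib, sub_eq_zero] using hne
  · simp [sub_smul, Finset.sum_sub_distrib, inner_sub_right, hab]

/-- With `w_i ∈ ν_i C⁰` linearly independent integer vectors, if
`|D_α⁺| > 2kα + 1` then every lattice point `u ∈ C` is orthogonal to a nonzero element
of `D_α`. -/
theorem perp_vector_in_D_alpha (n : ℕ) (hn : 2 ≤ n)
    (C : Set (Euc n)) (hC : IsSymmConvexBody C)
    (k : ℕ) (hk1 : 1 ≤ k) (hkn : k ≤ n)
    (ν : Fin k → ℝ) (hν : ∀ i, 0 < ν i)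
    (w : Fin k → Euc n) (hw : LinearIndependent ℝ w)
    (hwlat : ∀ i, IsLatticePoint (w i)) (hwpol : ∀ i, w i ∈ ν i • polarBody C)
    (α : ℝ) (hα : 0 ≤ α)
    (hcard : 2 * (k : ℝ) * α + 1 <
      (({y : Euc n | ∃ a : Fin k → ℤ, (∀ i, 0 ≤ a i ∧ (a i : ℝ) ≤ α / ν i) ∧
          y = ∑ i, (a i : ℝ) • w i}).ncard : ℝ)) :
    ∀ u ∈ C, IsLatticePoint u →
      ∃ v ∈ {y : Euc n | ∃ a : Fin k → ℤ, (∀ i, |(a i : ℝ)| ≤ α / ν i) ∧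
          y = ∑ i, (a i : ℝ) • w i},
        v ≠ 0 ∧ inner ℝ u v = (0 : ℝ) :=
  perp_vector_in_D_alpha_general n C hC k ν hν w hwlat hwpol α hα hcard
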